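/- The binary quartics f₃(x,y) = x⁴ + y⁴ and f₄(x,y) = x⁴ − y⁴ are not GL₂(ℝ)-equivalent, i.e. there is no invertible real 2×2 matrix P with f₄(u,v) = f₃(p₁₁u + p₁₂v, p₂₁u + p₂₂v); nevertheless their associated 2×2×2×2 symmetric tensors have identical spectral data: the tensor of f₃ has exactly four eigenpair classes, represented by (1,(1,0)), (1,(0,1)), (1,(1,1)) and (1,(1,−1)), and the tensor of f₄ has exactly four eigenpair classes, represented by (1,(1,0)), (−1,(0,1)), (1,(1,i)) and (1,(1,−i)), with no eigenpair class of either tensor having eigenvalue zero. -/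

import Mathlib

/-- `(lam, (x, y))` is an eigenpair of the 2×2×2×2 complex symmetric tensor associated with
the binary quartic `a x⁴ + 4b x³y + 6c x²y² + 4d xy³ + e y⁴`. -/
def IsQuarticEigenpair (a b c d e lam x y : ℂ) : Prop :=
  (x, y) ≠ (0, 0) ∧
  a * x ^ 3 + 3 * b * x ^ 2 * y + 3 * c * x * y ^ 2 + d * y ^ 3 = lam * x ∧
  b * x ^ 3 + 3 * c * x ^ 2 * y + 3 * d * x * y ^ 2 + e * y ^ 3 = lam * y

/-- Equivalence of eigenpairs of a fourth-order tensor. -/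
def QuarticEigenpairEquiv (lam x y lam' x' y' : ℂ) : Prop :=
  ∃ t : ℂ, t ≠ 0 ∧ t ^ 2 * lam = lam' ∧ t * x = x' ∧ t * y = y'

/-- GL₂(ℝ)-equivalence of real binary forms (as functions). -/
def QuarticGL2EquivR (f g : ℝ → ℝ → ℝ) : Prop :=
  ∃ p11 p12 p21 p22 : ℝ, p11 * p22 - p12 * p21 ≠ 0 ∧
    ∀ u v : ℝ, g u v = f (p11 * u + p12 * v) (p21 * u + p22 * v)

/-!
Both quartics are diagonal, `a x⁴ + e y⁴`, and the eigen-equations of a diagonal quartic decouple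
into `a x³ = λ x` and `e y³ = λ y`. Hence an eigenvector has `x = 0`, `y = 0`, or `a x² = e y² = λ`,
and after scaling to `x = 1` (or `y = 1`) the classes are `(a, (1, 0))`, `(e, (0, 1))` and
`(a, (1, s))` with `e s² = a`; for `f₃` this gives `s = ±1`, for `f₄` it gives `s = ±i`.
The four classes are told apart by the scaling-invariant cross product `x y' - x' y`.
The two forms are not equivalent over `ℝ` because `f₃` is nonnegative while `f₄(0, 1) < 0`.
-/

theorem not_quarticGL2EquivR_of_nonneg_of_neg {f g : ℝ → ℝ → ℝ} (hf : ∀ x y, 0 ≤ f x y)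
    {u v : ℝ} (hg : g u v < 0) : ¬ QuarticGL2EquivR f g := by
  rintro ⟨p11, p12, p21, p22, -, hfg⟩
  exact hg.not_ge (hfg u v ▸ hf _ _)

theorem QuarticEigenpairEquiv.mul_eq_mul {lam x y lam' x' y' : ℂ}
    (h : QuarticEigenpairEquiv lam x y lam' x' y') : x * y' = x' * y := by
  obtain ⟨t, -, -, rfl, rfl⟩ := h
  ring

theorem not_quarticEigenpairEquiv_of_mul_ne_mul {lam x y lam' x' y' : ℂ}
    (h : x * y' ≠ x' * y) : ¬ QuarticEigenpairEquiv lam x y lam' x' y' :=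
  fun he => h he.mul_eq_mul

section Diagonal

variable {a e lam x y : ℂ}

theorem isQuarticEigenpair_diagonal_left : IsQuarticEigenpair a 0 0 0 e a 1 0 :=
  ⟨by simp, by ring, by ring⟩

theorem isQuarticEigenpair_diagonal_right : IsQuarticEigenpair a 0 0 0 e e 0 1 :=
  ⟨by simp, by ring, by ring⟩

theorem isQuarticEigenpair_diagonal_of_mul_sq {s : ℂ} (hs : e * s ^ 2 = a) :
    IsQuarticEigenpair a 0 0 0 e a 1 s :=
  ⟨by simp, by ring, by linear_combination s * hs⟩

theorem IsQuarticEigenpair.diagonal_equiv (h : IsQuarticEigenpair a 0 0 0 e lam x y) :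
    QuarticEigenpairEquiv lam x y a 1 0 ∨ QuarticEigenpairEquiv lam x y e 0 1 ∨
      ∃ s, e * s ^ 2 = a ∧ QuarticEigenpairEquiv lam x y a 1 s := by
  obtain ⟨hne, hx3, hy3⟩ := h
  have hx3 : (a * x ^ 2 - lam) * x = 0 := by linear_combination hx3
  have hy3 : (e * y ^ 2 - lam) * y = 0 := by linear_combination hy3
  by_cases hx : x = 0
  · have hy : y ≠ 0 := fun hy => hne (by simp [hx, hy])
    have hlam : lam = e * y ^ 2 := by linear_combination -(mul_eq_zero.1 hy3).resolve_right hy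
    exact Or.inr (Or.inl ⟨y⁻¹, inv_ne_zero hy, by rw [hlam]; field_simp, by simp [hx],
      inv_mul_cancel₀ hy⟩)
  have hlam : lam = a * x ^ 2 := by linear_combination -(mul_eq_zero.1 hx3).resolve_right hx
  by_cases hy : y = 0
  · exact Or.inl ⟨x⁻¹, inv_ne_zero hx, by rw [hlam]; field_simp, inv_mul_cancel₀ hx, by simp [hy]⟩
  have hlam' : lam = e * y ^ 2 := by linear_combination -(mul_eq_zero.1 hy3).resolve_right hy
  refine Or.inr (Or.inr ⟨y / x, ?_, x⁻¹, inv_ne_zero hx, by rw [hlam]; field_simp,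
    inv_mul_cancel₀ hx, by ring⟩)
  field_simp
  linear_combination hlam'.symm.trans hlam

theorem IsQuarticEigenpair.diagonal_eigenvalue_ne_zero (ha : a ≠ 0) (he : e ≠ 0)
    (h : IsQuarticEigenpair a 0 0 0 e lam x y) : lam ≠ 0 := by
  rintro rfl
  obtain ⟨hne, hx3, hy3⟩ := h
  have hx : x = 0 := pow_eq_zero_iff three_ne_zero |>.1 <|
    (mul_eq_zero.1 (by linear_combination hx3 : a * x ^ 3 = 0)).resolve_left ha
  have hy : y = 0 := pow_eq_zero_iff three_ne_zero |>.1 <|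
    (mul_eq_zero.1 (by linear_combination hy3 : e * y ^ 3 = 0)).resolve_left he
  exact hne (by simp [hx, hy])

end Diagonal

theorem IsQuarticEigenpair.sum_fourth_powers_equiv {lam x y : ℂ}
    (h : IsQuarticEigenpair 1 0 0 0 1 lam x y) :
    QuarticEigenpairEquiv lam x y 1 1 0 ∨ QuarticEigenpairEquiv lam x y 1 0 1 ∨
      QuarticEigenpairEquiv lam x y 1 1 1 ∨ QuarticEigenpairEquiv lam x y 1 1 (-1) := by
  obtain h | h | ⟨s, hs, h⟩ := h.diagonal_equiv
  · exact Or.inl h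
  · exact Or.inr (Or.inl h)
  obtain rfl | rfl := sq_eq_sq_iff_eq_or_eq_neg.1 (by linear_combination hs : s ^ 2 = 1 ^ 2)
  · exact Or.inr (Or.inr (Or.inl h))
  · exact Or.inr (Or.inr (Or.inr h))

theorem IsQuarticEigenpair.diff_fourth_powers_equiv {lam x y : ℂ}
    (h : IsQuarticEigenpair 1 0 0 0 (-1) lam x y) :
    QuarticEigenpairEquiv lam x y 1 1 0 ∨ QuarticEigenpairEquiv lam x y (-1) 0 1 ∨
      QuarticEigenpairEquiv lam x y 1 1 Complex.I ∨
      QuarticEigenpairEquiv lam x y 1 1 (-Complex.I) := by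
  obtain h | h | ⟨s, hs, h⟩ := h.diagonal_equiv
  · exact Or.inl h
  · exact Or.inr (Or.inl h)
  obtain rfl | rfl := sq_eq_sq_iff_eq_or_eq_neg.1
    (by linear_combination -hs - Complex.I_sq : s ^ 2 = Complex.I ^ 2)
  · exact Or.inr (Or.inr (Or.inl h))
  · exact Or.inr (Or.inr (Or.inr h))

/-- `f₃ = x⁴ + y⁴` and `f₄ = x⁴ − y⁴` are not GL₂(ℝ)-equivalent, yet their tensors have
identical spectral data: each has exactly four eigenpair classes (representatives listed)
and no eigenpair class with eigenvalue zero.  Here `f₃` has quartic coefficients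
`(1,0,0,0,1)` and `f₄` has `(1,0,0,0,−1)`. -/
theorem stmt18 :
    ¬ QuarticGL2EquivR (fun x y => x ^ 4 + y ^ 4) (fun x y => x ^ 4 - y ^ 4) ∧
    -- spectral data of the tensor of f₃ = x⁴ + y⁴
    (IsQuarticEigenpair 1 0 0 0 1 1 1 0 ∧
     IsQuarticEigenpair 1 0 0 0 1 1 0 1 ∧
     IsQuarticEigenpair 1 0 0 0 1 1 1 1 ∧
     IsQuarticEigenpair 1 0 0 0 1 1 1 (-1) ∧
     ¬ QuarticEigenpairEquiv 1 1 0 1 0 1 ∧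
     ¬ QuarticEigenpairEquiv 1 1 0 1 1 1 ∧
     ¬ QuarticEigenpairEquiv 1 1 0 1 1 (-1) ∧
     ¬ QuarticEigenpairEquiv 1 0 1 1 1 1 ∧
     ¬ QuarticEigenpairEquiv 1 0 1 1 1 (-1) ∧
     ¬ QuarticEigenpairEquiv 1 1 1 1 1 (-1) ∧
     (∀ lam x y : ℂ, IsQuarticEigenpair 1 0 0 0 1 lam x y →
        QuarticEigenpairEquiv lam x y 1 1 0 ∨ QuarticEigenpairEquiv lam x y 1 0 1 ∨
          QuarticEigenpairEquiv lam x y 1 1 1 ∨ QuarticEigenpairEquiv lam x y 1 1 (-1)) ∧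
     (∀ lam x y : ℂ, IsQuarticEigenpair 1 0 0 0 1 lam x y → lam ≠ 0)) ∧
    -- spectral data of the tensor of f₄ = x⁴ − y⁴
    (IsQuarticEigenpair 1 0 0 0 (-1) 1 1 0 ∧
     IsQuarticEigenpair 1 0 0 0 (-1) (-1) 0 1 ∧
     IsQuarticEigenpair 1 0 0 0 (-1) 1 1 Complex.I ∧
     IsQuarticEigenpair 1 0 0 0 (-1) 1 1 (-Complex.I) ∧
     ¬ QuarticEigenpairEquiv 1 1 0 (-1) 0 1 ∧
     ¬ QuarticEigenpairEquiv 1 1 0 1 1 Complex.I ∧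
     ¬ QuarticEigenpairEquiv 1 1 0 1 1 (-Complex.I) ∧
     ¬ QuarticEigenpairEquiv (-1) 0 1 1 1 Complex.I ∧
     ¬ QuarticEigenpairEquiv (-1) 0 1 1 1 (-Complex.I) ∧
     ¬ QuarticEigenpairEquiv 1 1 Complex.I 1 1 (-Complex.I) ∧
     (∀ lam x y : ℂ, IsQuarticEigenpair 1 0 0 0 (-1) lam x y →
        QuarticEigenpairEquiv lam x y 1 1 0 ∨ QuarticEigenpairEquiv lam x y (-1) 0 1 ∨
          QuarticEigenpairEquiv lam x y 1 1 Complex.I ∨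
          QuarticEigenpairEquiv lam x y 1 1 (-Complex.I)) ∧
     (∀ lam x y : ℂ, IsQuarticEigenpair 1 0 0 0 (-1) lam x y → lam ≠ 0)) := by

  have distinct : ∀ {lam x y lam' x' y' : ℂ}, x * y' ≠ x' * y →
      ¬ QuarticEigenpairEquiv lam x y lam' x' y' := not_quarticEigenpairEquiv_of_mul_ne_mul
  refine ⟨not_quarticGL2EquivR_of_nonneg_of_neg (fun x y => by positivity) (u := 0) (v := 1)
      (by norm_num),
    ⟨isQuarticEigenpair_diagonal_left, isQuarticEigenpair_diagonal_right,
      isQuarticEigenpair_diagonal_of_mul_sq (by norm_num),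
      isQuarticEigenpair_diagonal_of_mul_sq (by norm_num),
      distinct (by simp), distinct (by simp), distinct (by simp), distinct (by simp),
      distinct (by simp), distinct (by norm_num [neg_eq_iff_add_eq_zero]),
      fun _ _ _ h => h.sum_fourth_powers_equiv,
      fun _ _ _ h => h.diagonal_eigenvalue_ne_zero one_ne_zero one_ne_zero⟩,
    ⟨isQuarticEigenpair_diagonal_left, isQuarticEigenpair_diagonal_right,
      isQuarticEigenpair_diagonal_of_mul_sq (by simp),
      isQuarticEigenpair_diagonal_of_mul_sq (by simp),
      distinct (by simp), distinct (by simp), distinct (by simp), distinct (by simp),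
      distinct (by simp), distinct (by norm_num [Complex.ext_iff]),
      fun _ _ _ h => h.diff_fourth_powers_equiv,
      fun _ _ _ h => h.diagonal_eigenvalue_ne_zero one_ne_zero (neg_ne_zero.2 one_ne_zero)⟩⟩
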